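/- arXiv:2405.15648 — 2 statements merged into one kernel-verified Lean document; each statement's English description precedes it below -/
import Mathlib

section
/- Let n ≥ 1 and let k, k' ∈ ZMod n be such that k - k' is a unit of ZMod n. Then there exists a map F on functions G × G → ℂ that is a finite composition of the operators S, T and T⁻¹, such that F (Z k) = Z k' and F (Z k') = Z k; i.e. two ℤ_n×ℤ_n SPT phases whose levels differ by an integer coprime to n are exchanged by a duality operation built from gauging and SPT stacking. (An explicit choice is F = T^{k} ∘ (T^{d-1} ∘ S ∘ T ∘ S ∘ T⁻¹ ∘ S) ∘ T^{-k} with d = k' - k.) -/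
/-!
Torus partition functions of (1+1)d theories with ℤ_n×ℤ_n symmetry,
modeled as functions `GG n × GG n → ℂ` where `GG n := ZMod n × ZMod n`
records the holonomies of each ℤ_n background gauge field around the
two cycles of the torus.
-/

noncomputable section

/-- The holonomy group of one ℤ_n background gauge field on the torus. -/
abbrev GG (n : ℕ) := ZMod n × ZMod n

/-- The intersection pairing `ε a b = a₁ b₂ - a₂ b₁`. -/
def epsPair {n : ℕ} (a b : GG n) : ZMod n := a.1 * b.2 - a.2 * b.1

/-- The character `e x = exp(2πi x.val / n)`. -/
def eChar (n : ℕ) (x : ZMod n) : ℂ :=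
  Complex.exp (2 * Real.pi * Complex.I * (x.val : ℂ) / n)

/-- The gauging operation `S` on torus partition functions. -/
def gaugeS (n : ℕ) [NeZero n] (f : GG n × GG n → ℂ) : GG n × GG n → ℂ :=
  fun P => (n : ℂ)⁻¹ * (n : ℂ)⁻¹ *
    ∑ a : GG n, ∑ b : GG n, f (a, b) * eChar n (epsPair a P.2 + epsPair b P.1)

/-- The SPT-stacking operation `T` on torus partition functions. -/
def stackT (n : ℕ) (f : GG n × GG n → ℂ) : GG n × GG n → ℂ :=
  fun P => f P * eChar n (epsPair P.1 P.2)

/-- The inverse SPT-stacking operation `T⁻¹` on torus partition functions. -/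
def stackTinv (n : ℕ) (f : GG n × GG n → ℂ) : GG n × GG n → ℂ :=
  fun P => f P * eChar n (-(epsPair P.1 P.2))

/-- The torus partition function of the level-`k` ℤ_n×ℤ_n SPT phase. -/
def Zspt (n : ℕ) (k : ZMod n) : GG n × GG n → ℂ :=
  fun P => eChar n (k * epsPair P.1 P.2)

/-- `IsManip n F` holds when `F` is a finite composition of the gauging
operation `S`, the SPT-stacking operation `T`, and its inverse `T⁻¹`. -/
inductive IsManip (n : ℕ) [NeZero n] :
    ((GG n × GG n → ℂ) → (GG n × GG n → ℂ)) → Prop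
  | id : IsManip n id
  | comp_S {F} : IsManip n F → IsManip n (gaugeS n ∘ F)
  | comp_T {F} : IsManip n F → IsManip n (stackT n ∘ F)
  | comp_Tinv {F} : IsManip n F → IsManip n (stackTinv n ∘ F)

/- On levels, `T` acts as `m ↦ m + 1` and `S` as `u ↦ u⁻¹` on units, while `S` sends `Z 0` to
the Dirichlet partition function `S (Z 0)`, which is supported on `B = 0` and hence fixed by `T`.
Since `S` is a Fourier transform for the pairing of `dualPair`, it is an involution. Hence, with
`v = u⁻¹`, the word `S T^v S T^(-v) S` exchanges the levels `0` and `u`: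
`0 ↦ S (Z 0) ↦ S (Z 0) ↦ 0 ↦ v ↦ u` and `u ↦ v ↦ 0 ↦ S (Z 0) ↦ S (Z 0) ↦ 0`.
Conjugating by `T^k'` moves the pair `{0, k - k'}` to `{k', k}`. -/

section

variable {n : ℕ}

def dualPair (x P : GG n × GG n) : ZMod n := epsPair x.1 P.2 + epsPair x.2 P.1

lemma dualPair_sub_right (x y P : GG n × GG n) :
    dualPair x (P - y) = dualPair x P + dualPair y x := by
  simp only [dualPair, epsPair, Prod.fst_sub, Prod.snd_sub]
  ring

variable [NeZero n]

lemma eChar_eq_stdAddChar (x : ZMod n) : eChar n x = ZMod.stdAddChar x := by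
  rw [ZMod.stdAddChar_apply, ZMod.toCircle_apply, eChar]

lemma eChar_add (x y : ZMod n) : eChar n (x + y) = eChar n x * eChar n y := by
  simp only [eChar_eq_stdAddChar, AddChar.map_add_eq_mul]

lemma sum_eChar_mul (c : ZMod n) :
    ∑ x : ZMod n, eChar n (x * c) = if c = 0 then (n : ℂ) else 0 := by
  simpa [eChar_eq_stdAddChar, ZMod.card] using
    AddChar.sum_mulShift c (ZMod.isPrimitive_stdAddChar n)

lemma sum_eChar_epsPair (c : GG n) :
    ∑ a : GG n, eChar n (epsPair a c) = if c = 0 then (n : ℂ) * n else 0 := by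
  have hsplit : ∀ a : GG n,
      eChar n (epsPair a c) = eChar n (a.1 * c.2) * eChar n (a.2 * -c.1) := by
    intro a
    rw [← eChar_add, epsPair]
    ring_nf
  simp only [hsplit, Fintype.sum_prod_type, ← Finset.sum_mul_sum, sum_eChar_mul, neg_eq_zero]
  by_cases h1 : c.1 = 0 <;> by_cases h2 : c.2 = 0 <;> simp [h1, h2, Prod.ext_iff]

lemma sum_eChar_dualPair (Q : GG n × GG n) :
    ∑ x : GG n × GG n, eChar n (dualPair x Q) =
      if Q = 0 then (n : ℂ) * n * (n * n) else 0 := by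
  rw [Fintype.sum_prod_type]
  simp only [dualPair, eChar_add, ← Finset.sum_mul_sum, sum_eChar_epsPair]
  by_cases h1 : Q.1 = 0 <;> by_cases h2 : Q.2 = 0 <;> simp [h1, h2, Prod.ext_iff]

lemma gaugeS_eq_sum (f : GG n × GG n → ℂ) (P : GG n × GG n) :
    gaugeS n f P = (n : ℂ)⁻¹ * (n : ℂ)⁻¹ * ∑ x, f x * eChar n (dualPair x P) := by
  rw [gaugeS, ← Fintype.sum_prod_type']
  rfl

theorem gaugeS_gaugeS (f : GG n × GG n → ℂ) : gaugeS n (gaugeS n f) = f := by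
  funext P
  have hn : (n : ℂ) ≠ 0 := Nat.cast_ne_zero.mpr (NeZero.ne n)
  calc gaugeS n (gaugeS n f) P
      = ((n : ℂ) * n * (n * n))⁻¹ * ∑ y, f y * ∑ x, eChar n (dualPair x (P - y)) := by
        simp only [gaugeS_eq_sum, dualPair_sub_right, eChar_add, Finset.mul_sum, Finset.sum_mul]
        rw [Finset.sum_comm]
        refine Finset.sum_congr rfl fun y _ => Finset.sum_congr rfl fun x _ => ?_
        ring
    _ = f P := by
        simp only [sum_eChar_dualPair, sub_eq_zero, mul_ite, mul_zero, Finset.sum_ite_eq,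
          Finset.mem_univ, if_true]
        field_simp

lemma gaugeS_Zspt_apply (m : ZMod n) (A B : GG n) :
    gaugeS n (Zspt n m) (A, B) = ∑ b, if m • b + B = 0 then eChar n (epsPair b A) else 0 := by
  have hn : (n : ℂ) ≠ 0 := Nat.cast_ne_zero.mpr (NeZero.ne n)
  have hsplit : ∀ a b : GG n, Zspt n m (a, b) * eChar n (epsPair a B + epsPair b A)
      = eChar n (epsPair a (m • b + B)) * eChar n (epsPair b A) := by
    intro a b
    rw [Zspt, ← eChar_add, ← eChar_add]
    congr 1
    simp only [epsPair, Prod.fst_add, Prod.snd_add, Prod.smul_fst, Prod.smul_snd, smul_eq_mul]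
    ring
  simp only [gaugeS, hsplit]
  rw [Finset.sum_comm]
  simp only [← Finset.sum_mul, sum_eChar_epsPair, Finset.mul_sum]
  refine Finset.sum_congr rfl fun b _ => ?_
  split_ifs
  · field_simp
  · simp

lemma gaugeS_Zspt_units (u : (ZMod n)ˣ) : gaugeS n (Zspt n u) = Zspt n ↑u⁻¹ := by
  funext ⟨A, B⟩
  have hsolve : ∀ b : GG n, (u : ZMod n) • b + B = 0 ↔ b = -((↑u⁻¹ : ZMod n) • B) := by
    intro b
    rw [add_eq_zero_iff_eq_neg, ← Units.smul_def, smul_eq_iff_eq_inv_smul, Units.smul_def,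
      smul_neg]
  simp only [gaugeS_Zspt_apply, hsolve, Finset.sum_ite_eq', Finset.mem_univ, if_true, Zspt]
  congr 1
  simp only [epsPair, Prod.fst_neg, Prod.snd_neg, Prod.smul_fst, Prod.smul_snd, smul_eq_mul]
  ring

lemma stackT_gaugeS_Zspt_zero : stackT n (gaugeS n (Zspt n 0)) = gaugeS n (Zspt n 0) := by
  funext ⟨A, B⟩
  by_cases hB : B = 0
  · simp [stackT, hB, epsPair, eChar]
  · simp [stackT, gaugeS_Zspt_apply, hB]

lemma stackT_Zspt (m : ZMod n) : stackT n (Zspt n m) = Zspt n (m + 1) := by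
  funext P
  simp only [stackT, Zspt, ← eChar_add]
  ring_nf

lemma stackT_iterate_Zspt (j : ℕ) (m : ZMod n) :
    (stackT n)^[j] (Zspt n m) = Zspt n (m + j) := by
  induction j with
  | zero => simp
  | succ j ih => rw [Function.iterate_succ_apply', ih, stackT_Zspt, Nat.cast_succ, add_assoc]

lemma stackT_iterate_val_Zspt (j m : ZMod n) :
    (stackT n)^[j.val] (Zspt n m) = Zspt n (m + j) := by
  rw [stackT_iterate_Zspt, ZMod.natCast_val, ZMod.cast_id', id]

end

namespace IsManip

variable {n : ℕ} [NeZero n]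

theorem comp {F G : (GG n × GG n → ℂ) → (GG n × GG n → ℂ)} (hG : IsManip n G)
    (hF : IsManip n F) : IsManip n (G ∘ F) := by
  induction hG with
  | id => exact hF
  | comp_S _ ih => exact ih.comp_S
  | comp_T _ ih => exact ih.comp_T
  | comp_Tinv _ ih => exact ih.comp_Tinv

theorem gaugeS : IsManip n (gaugeS n) := IsManip.id.comp_S

theorem stackT_iterate (j : ℕ) : IsManip n (stackT n)^[j] := by
  induction j with
  | zero => exact IsManip.id
  | succ j ih => rw [Function.iterate_succ']; exact ih.comp_T

end IsManip

theorem exists_isManip_swap_Zspt_zero {n : ℕ} [NeZero n] (u : (ZMod n)ˣ) :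
    ∃ W, IsManip n W ∧ W (Zspt n 0) = Zspt n u ∧ W (Zspt n u) = Zspt n 0 := by
  set v : ZMod n := ↑u⁻¹
  have hfixed : ∀ j : ℕ, (stackT n)^[j] (gaugeS n (Zspt n 0)) = gaugeS n (Zspt n 0) :=
    fun j => Function.iterate_fixed stackT_gaugeS_Zspt_zero j
  refine ⟨gaugeS n ∘ (stackT n)^[v.val] ∘ gaugeS n ∘ (stackT n)^[(-v).val] ∘ gaugeS n,
    ?_, ?_, ?_⟩
  · exact IsManip.gaugeS.comp ((IsManip.stackT_iterate v.val).comp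
      (IsManip.gaugeS.comp ((IsManip.stackT_iterate (-v).val).comp IsManip.gaugeS)))
  · simp only [Function.comp_apply]
    rw [hfixed, gaugeS_gaugeS, stackT_iterate_val_Zspt, zero_add, gaugeS_Zspt_units, inv_inv]
  · simp only [Function.comp_apply]
    rw [gaugeS_Zspt_units, stackT_iterate_val_Zspt, add_neg_cancel, hfixed, gaugeS_gaugeS]

/-- for `k, k' : ZMod n` with `k - k'` a unit of `ZMod n`, there
is a topological manipulation `F`, a finite composition of `S`, `T` and `T⁻¹`,
exchanging the level-`k` and level-`k'` ℤ_n×ℤ_n SPT phases: two SPT phases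
whose levels differ by an integer coprime to `n` are exchanged by a duality
operation built from gauging and SPT stacking. -/
theorem duality_between_SPTs_coprime_difference (n : ℕ) [NeZero n]
    (k k' : ZMod n) (hkk' : IsUnit (k - k')) :
    ∃ F : (GG n × GG n → ℂ) → (GG n × GG n → ℂ),
      IsManip n F ∧ F (Zspt n k) = Zspt n k' ∧ F (Zspt n k') = Zspt n k := by
  obtain ⟨W, hW, hW₀, hWu⟩ := exists_isManip_swap_Zspt_zero hkk'.unit
  refine ⟨(stackT n)^[k'.val] ∘ W ∘ (stackT n)^[(-k').val],
    (IsManip.stackT_iterate _).comp (hW.comp (IsManip.stackT_iterate _)), ?_, ?_⟩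
  · simp only [Function.comp_apply]
    rw [stackT_iterate_val_Zspt, ← sub_eq_add_neg, ← hkk'.unit_spec, hWu,
      stackT_iterate_val_Zspt, zero_add]
  · simp only [Function.comp_apply]
    rw [stackT_iterate_val_Zspt, add_neg_cancel, hW₀, stackT_iterate_val_Zspt, IsUnit.unit_spec,
      sub_add_cancel]

end
end

section
/- Fix an even integer N ≥ 4 and let V := ∏_{j : Fin N} Matrix.exp ((π * Complex.I / 4) • (1 + (ε j : ℂ) • (Z j * Z (j + 1)))). Then V commutes with both generators of the ℤ₂×ℤ₂ symmetry: V * U_A = U_A * V and V * U_B = U_B * V, where U_A := ∏_{j : Fin N, (j : ℕ) odd} X j and U_B := ∏_{j : Fin N, (j : ℕ) even} X j. Hence V is a ℤ₂×ℤ₂-symmetric SPT entangler. -/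
noncomputable section

open NormedSpace  -- for the exponential `exp 𝕂`

/-- Spin configurations of a periodic chain of `N` qubits. -/
abbrev Conf (N : ℕ) := Fin N → Fin 2

/-- The Pauli-z operator at site `j`: the diagonal matrix with
`(Z j) s s = (-1)^(s j)`. -/
def PZ (N : ℕ) (j : Fin N) : Matrix (Conf N) (Conf N) ℂ :=
  Matrix.diagonal (fun s => (-1 : ℂ) ^ ((s j : ℕ)))

/-- The Pauli-x operator at site `j`: `(X j) s t = 1` if `t` agrees with `s`
at every site other than `j` and `t j ≠ s j`, and `0` otherwise. -/
def PX (N : ℕ) (j : Fin N) : Matrix (Conf N) (Conf N) ℂ :=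
  fun s t => if (∀ i, i ≠ j → t i = s i) ∧ t j ≠ s j then 1 else 0

/-- The sign `ε j = (-1)^j`, well defined on `Fin N` for even `N`. -/
def epsSign (N : ℕ) (j : Fin N) : ℂ := (-1 : ℂ) ^ ((j : ℕ))

/-- The SPT entangler
`V = ∏_{j : Fin N} exp((πi/4) • (1 + ε j • (Z j * Z (j+1))))`.
All factors are pairwise commuting, so the product over `Fin N` is
unambiguous; we realize it as the ordered product of the list of factors. -/
def entangler (N : ℕ) [NeZero N] : Matrix (Conf N) (Conf N) ℂ :=
  (List.ofFn (fun j : Fin N =>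
    exp (((Real.pi : ℂ) * Complex.I / 4) •
      ((1 : Matrix (Conf N) (Conf N) ℂ) +
        epsSign N j • (PZ N j * PZ N (j + 1)))))).prod

/-- The generator `U_A = ∏_{j odd} X j` of the first ℤ₂ symmetry, realized as
the ordered product of the (pairwise commuting) Pauli-x factors on odd sites. -/
def UA (N : ℕ) : Matrix (Conf N) (Conf N) ℂ :=
  (List.ofFn (fun j : Fin N => if Odd (j : ℕ) then PX N j else 1)).prod

/-- The generator `U_B = ∏_{j even} X j` of the second ℤ₂ symmetry. -/
def UB (N : ℕ) : Matrix (Conf N) (Conf N) ℂ :=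
  (List.ofFn (fun j : Fin N => if Even (j : ℕ) then PX N j else 1)).prod

/-!
`V` is diagonal in the `Z` basis, with entry `∏ⱼ exp(iπ/4 (1 + εⱼ zⱼ zⱼ₊₁))` at a
configuration with spins `zⱼ = ±1`, while `U_A` and `U_B` translate configurations by the
indicator of the odd, resp. even, sites. Both translations reverse every bond `zⱼ zⱼ₊₁`, and
since `exp(iπ/4 (1 - x)) = exp(iπ/4 (1 + x)) · (-i x)` for `x = ±1`, this multiplies the entry
by `∏ⱼ (-i εⱼ) · ∏ⱼ zⱼ zⱼ₊₁ = (-i)^(N²) · 1 = 1` for even `N`.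
-/

open Matrix Complex
open scoped Real

section TranslationMatrix

variable {G R : Type*} [AddGroup G] [DecidableEq G] [NonAssocSemiring R]

variable (R) in
def translationMatrix (a : G) : Matrix G G R := (Equiv.addRight a).permMatrix R

lemma translationMatrix_apply (a s t : G) :
    translationMatrix R a s t = if s + a = t then 1 else 0 := by
  simp [translationMatrix, PEquiv.toMatrix_apply]

lemma translationMatrix_zero : translationMatrix R (0 : G) = 1 := by
  simp [translationMatrix, Equiv.addRight_zero]

lemma translationMatrix_add [Fintype G] (a b : G) :
    translationMatrix R (a + b) = translationMatrix R a * translationMatrix R b := by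
  rw [translationMatrix, Equiv.addRight_add, permMatrix_mul]
  rfl

lemma translationMatrix_list_sum [Fintype G] (l : List G) :
    translationMatrix R l.sum = (l.map (translationMatrix R)).prod := by
  induction l with
  | nil => exact translationMatrix_zero
  | cons a l ih => rw [List.sum_cons, translationMatrix_add, ih, List.map_cons, List.prod_cons]

lemma commute_diagonal_translationMatrix [Fintype G] {d : G → R} {a : G}
    (hd : ∀ s, d (s + a) = d s) : Commute (diagonal d) (translationMatrix R a) := by
  ext s t
  rw [diagonal_mul, mul_diagonal, translationMatrix_apply]
  split_ifs with h
  · simp [← h, hd]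
  · simp

end TranslationMatrix

lemma Fin.prod_mul_succ_eq_sq {M : Type*} [CommMonoid M] {n : ℕ} [NeZero n] (w : Fin n → M) :
    ∏ j, w j * w (j + 1) = (∏ j, w j) ^ 2 := by
  rw [Finset.prod_mul_distrib, sq]
  congr 1
  exact Fintype.prod_equiv (Equiv.addRight 1) _ _ fun j => rfl

lemma Finset.prod_range_pow_two_mul_add_one {M : Type*} [CommMonoid M] (x : M) (n : ℕ) :
    ∏ i ∈ range n, x ^ (2 * i + 1) = x ^ (n ^ 2) := by
  induction n with
  | zero => simp
  | succ n ih => rw [prod_range_succ, ih, ← pow_add]; ring_nf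

lemma Fin.val_add_one_mod_two {N : ℕ} [NeZero N] (hN : Even N) (j : Fin N) :
    ((j + 1 : Fin N) : ℕ) % 2 = ((j : ℕ) + 1) % 2 := by
  have h2 : 2 ∣ N := hN.two_dvd
  rw [Fin.val_add, Nat.mod_mod_of_dvd _ h2, Nat.add_mod, Fin.val_one', Nat.mod_mod_of_dvd _ h2,
    ← Nat.add_mod]

lemma Fin.odd_val_add_one_iff {N : ℕ} [NeZero N] (hN : Even N) (j : Fin N) :
    Odd ((j + 1 : Fin N) : ℕ) ↔ ¬Odd (j : ℕ) := by
  rw [Nat.odd_iff, Nat.odd_iff, Fin.val_add_one_mod_two hN]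
  omega

lemma cexp_pi_mul_I_div_four_mul_one_sub {x : ℂ} (hx : x * x = 1) :
    cexp (π * I / 4 * (1 - x)) = cexp (π * I / 4 * (1 + x)) * (-I * x) := by
  have hhalf : cexp (π / 2 * I) = I := exp_pi_div_two_mul_I
  rcases mul_self_eq_one_iff.mp hx with rfl | rfl
  · rw [show π * I / 4 * (1 + 1 : ℂ) = π / 2 * I by ring, hhalf]
    simp
  · rw [show π * I / 4 * (1 - -1 : ℂ) = π / 2 * I by ring, hhalf]
    simp

variable {N : ℕ}

lemma PX_eq_translationMatrix (j : Fin N) : PX N j = translationMatrix ℂ (Pi.single j 1) := by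
  ext s t
  have hflip : ∀ x y : Fin 2, x ≠ y ↔ x = y + 1 := by decide
  rw [PX, translationMatrix_apply]
  congr 1
  apply propext
  rw [eq_comm, funext_iff]
  constructor
  · rintro ⟨hne, hj⟩ i
    by_cases hi : i = j
    · subst hi
      simpa [hflip] using hj
    · simpa [hi] using hne i hi
  · intro h
    exact ⟨fun i hi => by simpa [hi] using h i, by simpa [hflip] using h j⟩

lemma list_prod_ofFn_ite_PX (p : Fin N → Prop) [DecidablePred p] :
    (List.ofFn fun j => if p j then PX N j else 1).prod
      = translationMatrix ℂ (fun i => if p i then 1 else 0) := by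
  have hfactor : (fun j => if p j then PX N j else 1)
      = translationMatrix ℂ ∘ fun j => Pi.single j (if p j then 1 else 0) := by
    funext j
    by_cases h : p j <;> simp [h, PX_eq_translationMatrix, translationMatrix_zero]
  rw [hfactor, ← List.map_ofFn, ← translationMatrix_list_sum, List.sum_ofFn,
    Finset.univ_sum_single]

def spin (s : Conf N) (j : Fin N) : ℂ := (-1) ^ (s j : ℕ)

lemma spin_add (s a : Conf N) (j : Fin N) : spin (s + a) j = spin s j * spin a j := by
  rw [spin, spin, spin, ← pow_add, Pi.add_apply, Fin.val_add, ← neg_one_pow_eq_pow_mod_two]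

lemma spin_mul_self (s : Conf N) (j : Fin N) : spin s j * spin s j = 1 := by
  rw [spin, ← pow_add]
  exact Even.neg_one_pow ⟨_, rfl⟩

lemma epsSign_mul_self (j : Fin N) : epsSign N j * epsSign N j = 1 := by
  rw [epsSign, ← pow_add]
  exact Even.neg_one_pow ⟨_, rfl⟩

def entanglerPhase (N : ℕ) [NeZero N] (s : Conf N) : ℂ :=
  ∏ j, cexp (π * I / 4 * (1 + epsSign N j * (spin s j * spin s (j + 1))))

lemma entangler_eq_diagonal [NeZero N] : entangler N = diagonal (entanglerPhase N) := by
  have hfactor : (fun j : Fin N =>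
      NormedSpace.exp ((π * I / 4 : ℂ) • (1 + epsSign N j • (PZ N j * PZ N (j + 1)))))
        = diagonalRingHom (Conf N) ℂ ∘
            fun j s => cexp (π * I / 4 * (1 + epsSign N j * (spin s j * spin s (j + 1)))) := by
    funext j
    rw [PZ, PZ, diagonal_mul_diagonal, ← diagonal_smul, ← diagonal_one, diagonal_add,
      ← diagonal_smul, exp_diagonal, Pi.exp_def]
    simp [spin, Complex.exp_eq_exp_ℂ]
  rw [entangler, hfactor, ← List.map_ofFn, ← map_list_prod, List.prod_ofFn]
  refine congrArg diagonal (funext fun s => ?_)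
  rw [Finset.prod_apply]
  rfl

lemma prod_neg_I_mul_epsSign (hN : Even N) : ∏ j : Fin N, (-I * epsSign N j) = 1 := by
  have hodd : ∀ j : Fin N, -I * epsSign N j = (-I) ^ (2 * (j : ℕ) + 1) := by
    intro j
    rw [epsSign, pow_succ, pow_mul, neg_sq, I_sq]
    ring
  obtain ⟨m, rfl⟩ := hN
  rw [Finset.prod_congr rfl fun j _ => hodd j,
    Fin.prod_univ_eq_prod_range (fun i => (-I) ^ (2 * i + 1)),
    Finset.prod_range_pow_two_mul_add_one, show (m + m) ^ 2 = 4 * m ^ 2 by ring, pow_mul]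
  norm_num

lemma entanglerPhase_add_of_alternating [NeZero N] (hN : Even N) {a : Conf N}
    (ha : ∀ j, spin a (j + 1) = -spin a j) (s : Conf N) :
    entanglerPhase N (s + a) = entanglerPhase N s := by
  set x : Fin N → ℂ := fun j => epsSign N j * (spin s j * spin s (j + 1))
  have hx : ∀ j, x j * x j = 1 := fun j => calc
    x j * x j = epsSign N j * epsSign N j * (spin s j * spin s j) *
        (spin s (j + 1) * spin s (j + 1)) := by ring
    _ = 1 := by rw [epsSign_mul_self, spin_mul_self, spin_mul_self, one_mul, one_mul]
  have hbond : ∀ j, epsSign N j * (spin (s + a) j * spin (s + a) (j + 1)) = -x j := fun j => by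
    rw [spin_add, spin_add, ha]
    linear_combination -x j * spin_mul_self a j
  calc entanglerPhase N (s + a)
      = ∏ j, cexp (π * I / 4 * (1 + x j)) * (-I * x j) := by
        simp only [entanglerPhase, hbond, ← sub_eq_add_neg,
          cexp_pi_mul_I_div_four_mul_one_sub (hx _)]
    _ = entanglerPhase N s * ∏ j, (-I * epsSign N j) * (spin s j * spin s (j + 1)) := by
        rw [Finset.prod_mul_distrib]
        congr 1
        exact Finset.prod_congr rfl fun j _ => (mul_assoc _ _ _).symm
    _ = entanglerPhase N s * ((∏ j, (-I * epsSign N j)) * (∏ j, spin s j) ^ 2) := by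
        rw [Finset.prod_mul_distrib, Fin.prod_mul_succ_eq_sq]
    _ = entanglerPhase N s := by
        rw [prod_neg_I_mul_epsSign hN, ← Finset.prod_pow]
        simp [sq, spin_mul_self]

lemma spin_indicator_add_one [NeZero N] {p : Fin N → Prop} [DecidablePred p]
    (hp : ∀ j, p (j + 1) ↔ ¬p j) (j : Fin N) :
    spin (fun i => if p i then 1 else 0) (j + 1) = -spin (fun i => if p i then 1 else 0) j := by
  by_cases h : p j <;> simp [spin, h, hp]

theorem entangler_symmetric_general (N : ℕ) [NeZero N] (hNeven : Even N) :
    entangler N * UA N = UA N * entangler N ∧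
    entangler N * UB N = UB N * entangler N := by
  have hodd := Fin.odd_val_add_one_iff hNeven
  have heven : ∀ j : Fin N, Even ((j + 1 : Fin N) : ℕ) ↔ ¬Even (j : ℕ) :=
    fun j => by rw [← Nat.not_odd_iff_even, ← Nat.not_odd_iff_even, hodd]
  rw [entangler_eq_diagonal, UA, UB, list_prod_ofFn_ite_PX, list_prod_ofFn_ite_PX]
  exact ⟨(commute_diagonal_translationMatrix
      (entanglerPhase_add_of_alternating hNeven (spin_indicator_add_one hodd))).eq,
    (commute_diagonal_translationMatrix
      (entanglerPhase_add_of_alternating hNeven (spin_indicator_add_one heven))).eq⟩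

/-- for even `N ≥ 4`, the SPT entangler `V` commutes with both
generators `U_A` and `U_B` of the ℤ₂×ℤ₂ symmetry; hence `V` is a
ℤ₂×ℤ₂-symmetric SPT entangler. -/
theorem entangler_symmetric (N : ℕ) [NeZero N] (hN : 4 ≤ N) (hNeven : Even N) :
    entangler N * UA N = UA N * entangler N ∧
    entangler N * UB N = UB N * entangler N :=
  entangler_symmetric_general N hNeven

end
end
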